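/- Let P = {d_1, ..., d_{n+1}} be a positive basis of unit vectors of ℝⁿ with n ≥ 1. Then cm(P) ≤ 1/n, with equality if and only if d_i⊤ d_j = −1/n for all i ≠ j. -/

import Mathlib

open scoped RealInnerProductSpace
open Module Finset

/-- The cosine measure of a finite family of unit vectors indexed by `Fin (n+1)`. -/
noncomputable def cosineMeasureFam {n : ℕ} (d : Fin (n + 1) → EuclideanSpace ℝ (Fin n)) : ℝ :=
  sInf {r : ℝ | ∃ v : EuclideanSpace ℝ (Fin n), ‖v‖ = 1 ∧
    r = Finset.univ.sup' Finset.univ_nonempty (fun i => ⟪v, d i⟫)}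

lemma exists_dual_vec {n : ℕ} (j : Fin (n+1)) (d : Fin (n+1) → EuclideanSpace ℝ (Fin n))
    (hsp : ⊤ ≤ Submodule.span ℝ (Set.range (fun i : {i : Fin (n+1) // i ≠ j} => d i.1))) :
    ∃ w : EuclideanSpace ℝ (Fin n), ∀ i : Fin (n+1), i ≠ j → ⟪w, d i⟫ = 1 := by
  have hcard : Fintype.card {i : Fin (n+1) // i ≠ j} = finrank ℝ (EuclideanSpace ℝ (Fin n)) := by
    simp [Fintype.card_subtype_compl]
  let B := basisOfTopLeSpanOfCardEqFinrank _ hsp hcard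
  let f := LinearMap.toContinuousLinearMap B.sumCoords
  refine ⟨(InnerProductSpace.toDual ℝ _).symm f, fun i hij => ?_⟩
  have hB : d i = B ⟨i, hij⟩ := by
    simp [B, coe_basisOfTopLeSpanOfCardEqFinrank]
  rw [InnerProductSpace.toDual_symm_apply, hB]
  show B.sumCoords (B ⟨i, hij⟩) = 1
  rw [Basis.sumCoords_self_apply]

set_option maxHeartbeats 1600000 in
theorem minimal_positive_basis_cosine_measure_bound (n : ℕ) (hn : 1 ≤ n)
    (d : Fin (n + 1) → EuclideanSpace ℝ (Fin n))
    (hinj : Function.Injective d)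
    (hunit : ∀ i, ‖d i‖ = 1)
    (hspan : ∀ x : EuclideanSpace ℝ (Fin n),
      ∃ c : Fin (n + 1) → ℝ, (∀ i, 0 ≤ c i) ∧ x = ∑ i, c i • d i)
    (hmin : ∀ i : Fin (n + 1), ¬ ∀ x : EuclideanSpace ℝ (Fin n),
      ∃ c : Fin (n + 1) → ℝ, (∀ j, 0 ≤ c j) ∧ c i = 0 ∧ x = ∑ j, c j • d j) :
    cosineMeasureFam d ≤ 1 / n ∧
    (cosineMeasureFam d = 1 / n ↔ ∀ i j, i ≠ j → ⟪d i, d j⟫ = -(1 / n)) := by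
  classical
  have hnR : (0:ℝ) < n := by exact_mod_cast hn.trans_lt' (by norm_num)
  set S : Set ℝ := {r : ℝ | ∃ v : EuclideanSpace ℝ (Fin n), ‖v‖ = 1 ∧
    r = Finset.univ.sup' Finset.univ_nonempty (fun i => ⟪v, d i⟫)} with hS
  have hcmdef : cosineMeasureFam d = sInf S := rfl
  -- S is bounded below
  have hbdd : BddBelow S := by
    refine ⟨-1, fun r hr => ?_⟩
    obtain ⟨v, hv, rfl⟩ := hr
    refine le_trans ?_ (Finset.le_sup' (fun i => ⟪v, d i⟫) (Finset.mem_univ 0))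
    have := abs_real_inner_le_norm v (d 0)
    rw [hv, hunit, one_mul] at this
    linarith [neg_abs_le (⟪v, d 0⟫)]
  have hSne : S.Nonempty := by
    exact ⟨_, d 0, hunit 0, rfl⟩
  -- positive coefficients with zero combination
  obtain ⟨c, hc0, hcsum⟩ := hspan (-(∑ i, d i))
  set lam : Fin (n+1) → ℝ := fun i => c i + 1 with hlamdef
  have hlampos : ∀ i, 0 < lam i := fun i => by have := hc0 i; simp only [hlamdef]; linarith
  have hrel : ∑ i, lam i • d i = 0 := by
    have : ∑ i, (c i + 1) • d i = ∑ i, c i • d i + ∑ i, d i := by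
      rw [← Finset.sum_add_distrib]
      simp [add_smul]
    simp only [hlamdef, this, ← hcsum]
    abel
  set L : ℝ := ∑ i, lam i with hLdef
  -- spanning facts
  have hspan_all : ⊤ ≤ Submodule.span ℝ (Set.range d) := by
    intro x _
    obtain ⟨c', -, rfl⟩ := hspan x
    exact Submodule.sum_mem _ fun i _ =>
      Submodule.smul_mem _ _ (Submodule.subset_span ⟨i, rfl⟩)
  have hsub : ∀ j : Fin (n+1),
      ⊤ ≤ Submodule.span ℝ (Set.range (fun i : {i : Fin (n+1) // i ≠ j} => d i.1)) := by
    intro j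
    refine le_trans hspan_all (Submodule.span_le.mpr ?_)
    rintro x ⟨i, rfl⟩
    by_cases hij : i = j
    · subst hij
      have h1 : lam i • d i = -∑ k ∈ Finset.univ.erase i, lam k • d k := by
        have h3 := Finset.add_sum_erase Finset.univ (fun k => lam k • d k) (Finset.mem_univ i)
        rw [hrel] at h3
        exact eq_neg_of_add_eq_zero_left h3
      have h2 : d i = (lam i)⁻¹ • (lam i • d i) := by
        rw [smul_smul, inv_mul_cancel₀ (hlampos i).ne', one_smul]
      rw [h2, h1]
      refine Submodule.smul_mem _ _ (Submodule.neg_mem _ (Submodule.sum_mem _ fun k hk => ?_))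
      exact Submodule.smul_mem _ _
        (Submodule.subset_span ⟨⟨k, (Finset.mem_erase.mp hk).1⟩, rfl⟩)
    · exact Submodule.subset_span ⟨⟨i, hij⟩, rfl⟩
  choose w hw using fun j => exists_dual_vec j d (hsub j)
  -- basic computations about w j
  have hLj : ∀ j, ∑ i ∈ Finset.univ.erase j, lam i = L - lam j := by
    intro j
    have := Finset.add_sum_erase Finset.univ lam (Finset.mem_univ j)
    rw [← hLdef] at this
    linarith
  have heras_pos : ∀ j : Fin (n+1), 0 < L - lam j := by
    intro j
    rw [← hLj j]
    refine Finset.sum_pos (fun i _ => hlampos i) ?_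
    rw [← Finset.card_pos, Finset.card_erase_of_mem (Finset.mem_univ j)]
    simp only [Finset.card_univ, Fintype.card_fin]
    omega
  have hwd : ∀ j, lam j * ⟪w j, d j⟫ = -(L - lam j) := by
    intro j
    have h0 : ⟪w j, ∑ i, lam i • d i⟫ = 0 := by rw [hrel, inner_zero_right]
    rw [inner_sum] at h0
    simp only [real_inner_smul_right] at h0
    rw [← Finset.add_sum_erase Finset.univ _ (Finset.mem_univ j)] at h0
    have h1 : ∑ i ∈ Finset.univ.erase j, lam i * ⟪w j, d i⟫
        = ∑ i ∈ Finset.univ.erase j, lam i := by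
      refine Finset.sum_congr rfl fun i hi => ?_
      rw [hw j i (Finset.mem_erase.mp hi).1, mul_one]
    rw [h1, hLj j] at h0
    linarith
  have hCS : ∀ j, L - lam j ≤ lam j * ‖w j‖ := by
    intro j
    have h1 := abs_real_inner_le_norm (w j) (d j)
    rw [hunit, mul_one] at h1
    have h2 : -⟪w j, d j⟫ ≤ ‖w j‖ := by
      have := neg_abs_le (⟪w j, d j⟫); linarith
    have h3 : lam j * (-⟪w j, d j⟫) ≤ lam j * ‖w j‖ :=
      mul_le_mul_of_nonneg_left h2 (hlampos j).le
    have h4 := hwd j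
    nlinarith
  have hwpos : ∀ j, 0 < ‖w j‖ := by
    intro j
    rcases (norm_nonneg (w j)).lt_or_eq with h | h
    · exact h
    · exfalso
      have h1 := hCS j
      rw [← h, mul_zero] at h1
      exact absurd h1 (not_le.mpr (heras_pos j))
  -- membership of 1/‖w j‖ in S
  haveI : Nontrivial (Fin (n+1)) := ⟨⟨⟨0, by omega⟩, ⟨1, by omega⟩, by simp [Fin.ext_iff]⟩⟩
  have hmemS : ∀ j, (‖w j‖)⁻¹ ∈ S := by
    intro j
    refine ⟨(‖w j‖)⁻¹ • w j, ?_, ?_⟩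
    · rw [norm_smul, norm_inv, norm_norm, inv_mul_cancel₀ (hwpos j).ne']
    · refine le_antisymm ?_ ?_
      · obtain ⟨i0, hi0⟩ := exists_ne j
        refine le_trans (le_of_eq ?_) (Finset.le_sup' _ (Finset.mem_univ i0))
        rw [real_inner_smul_left, hw j i0 hi0, mul_one]
      · rw [Finset.sup'_le_iff]
        intro i _
        rw [real_inner_smul_left]
        by_cases hij : i = j
        · subst hij
          have h1 : ⟪w i, d i⟫ < 0 := by
            have := hwd i
            have := heras_pos i
            nlinarith [hlampos i]
          have : (‖w i‖)⁻¹ * ⟪w i, d i⟫ ≤ 0 :=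
            mul_nonpos_of_nonneg_of_nonpos (inv_nonneg.mpr (norm_nonneg _)) h1.le
          have h2 : (0:ℝ) < (‖w i‖)⁻¹ := inv_pos.mpr (hwpos i)
          linarith
        · rw [hw j i hij, mul_one]
  have hcmle : ∀ j, cosineMeasureFam d ≤ (‖w j‖)⁻¹ := fun j => csInf_le hbdd (hmemS j)
  -- Part 1 : the bound
  have part1 : cosineMeasureFam d ≤ 1 / n := by
    obtain ⟨j0, -, hj0⟩ := Finset.exists_min_image Finset.univ lam Finset.univ_nonempty
    have hmin' : ∀ i, lam j0 ≤ lam i := fun i => hj0 i (Finset.mem_univ i)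
    have hge : (n:ℝ) * lam j0 ≤ L - lam j0 := by
      rw [← hLj j0]
      have hcard : (Finset.univ.erase j0).card = n := by
        rw [Finset.card_erase_of_mem (Finset.mem_univ j0)]
        simp
      calc (n:ℝ) * lam j0 = ∑ _i ∈ Finset.univ.erase j0, lam j0 := by
            rw [Finset.sum_const, hcard, nsmul_eq_mul]
        _ ≤ ∑ i ∈ Finset.univ.erase j0, lam i :=
            Finset.sum_le_sum fun i _ => hmin' i
    have hwn : (n:ℝ) ≤ ‖w j0‖ := by
      have := hCS j0
      have hl := hlampos j0
      nlinarith
    have : (‖w j0‖)⁻¹ ≤ 1 / n := by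
      rw [one_div]
      exact inv_anti₀ hnR hwn
    exact (hcmle j0).trans this
  refine ⟨part1, ?_, ?_⟩
  -- Part 2 (⇒)
  · intro hcm
    have hwle : ∀ j, ‖w j‖ ≤ n := by
      intro j
      have h1 : (1:ℝ)/n ≤ (‖w j‖)⁻¹ := hcm ▸ hcmle j
      rw [inv_eq_one_div, div_le_div_iff₀ hnR (hwpos j)] at h1
      linarith
    have hlamge : ∀ j, L ≤ (n + 1) * lam j := by
      intro j
      have h1 := hCS j
      have h2 : lam j * ‖w j‖ ≤ lam j * n := mul_le_mul_of_nonneg_left (hwle j) (hlampos j).le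
      nlinarith
    have hlameq : ∀ j, lam j = L / (n + 1) := by
      have hne : ((n:ℝ) + 1) ≠ 0 := by positivity
      have hsum : ∑ j, (lam j - L / (n+1)) = 0 := by
        rw [Finset.sum_sub_distrib, Finset.sum_const, ← hLdef, Finset.card_univ,
          Fintype.card_fin, nsmul_eq_mul]
        push_cast
        field_simp
        ring
      have hnn : ∀ j ∈ Finset.univ, (0:ℝ) ≤ lam j - L / (n+1) := by
        intro j _
        have h1 := hlamge j
        have hpos : (0:ℝ) < (n:ℝ) + 1 := by linarith
        rw [sub_nonneg, div_le_iff₀ hpos]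
        nlinarith
      intro j
      have := (Finset.sum_eq_zero_iff_of_nonneg hnn).mp hsum j (Finset.mem_univ j)
      linarith
    have hweq : ∀ j, ‖w j‖ = n := by
      intro j
      refine le_antisymm (hwle j) ?_
      have h1 := hCS j
      have h2 := hlameq j
      have hl := hlampos j
      have : L - lam j = n * lam j := by rw [h2]; field_simp; ring
      nlinarith
    -- Cauchy-Schwarz equality gives w j = -(n) • d j
    have hwform : ∀ j, w j = -((n:ℝ) • d j) := by
      intro j
      have hin : ⟪w j, -d j⟫ = ‖w j‖ * ‖-d j‖ := by
        rw [inner_neg_right, norm_neg, hunit, mul_one, hweq j]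
        have h1 := hwd j
        have h2 : L - lam j = n * lam j := by rw [hlameq j]; field_simp; ring
        have hl := (hlampos j).ne'
        field_simp at h1 ⊢
        nlinarith [hlampos j]
      have := inner_eq_norm_mul_iff_real.mp hin
      rw [norm_neg, hunit, one_smul, hweq j] at this
      rw [this, smul_neg]
    intro i j hij
    have h1 := hw i j (Ne.symm hij)
    rw [hwform i, inner_neg_left, real_inner_smul_left] at h1
    have : ⟪d i, d j⟫ = -(1/n) := by
      field_simp at h1 ⊢
      linarith
    exact this
  -- Part 2 (⇐)
  · intro hsx
    refine le_antisymm part1 ?_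
    -- sum of the d i is zero
    have hdd : ∀ i, ⟪d i, d i⟫ = 1 := by
      intro i; rw [real_inner_self_eq_norm_sq, hunit, one_pow]
    have hrowsum : ∀ k, ∑ i, ⟪d i, d k⟫ = 0 := by
      intro k
      rw [← Finset.add_sum_erase Finset.univ _ (Finset.mem_univ k), hdd]
      have : ∑ i ∈ Finset.univ.erase k, ⟪d i, d k⟫
          = ∑ i ∈ Finset.univ.erase k, (-(1/n) : ℝ) := by
        refine Finset.sum_congr rfl fun i hi => hsx i k (Finset.mem_erase.mp hi).1
      rw [this, Finset.sum_const, Finset.card_erase_of_mem (Finset.mem_univ k)]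
      simp only [Fintype.card_fin, Finset.card_univ]
      rw [Nat.add_sub_cancel, nsmul_eq_mul]
      field_simp
      norm_num
    have hsum0 : ∑ i, d i = 0 := by
      rw [← inner_self_eq_zero (𝕜 := ℝ)]
      rw [inner_sum]
      simp only [sum_inner]
      rw [Finset.sum_congr rfl fun k _ => hrowsum k]
      simp
    have hTk : ∀ k, ∑ i, ⟪d k, d i⟫ • d i = ((1:ℝ) + 1/n) • d k := by
      intro k
      rw [← Finset.add_sum_erase Finset.univ _ (Finset.mem_univ k), hdd]
      have h1 : ∑ i ∈ Finset.univ.erase k, ⟪d k, d i⟫ • d i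
          = (-(1/n) : ℝ) • ∑ i ∈ Finset.univ.erase k, d i := by
        rw [Finset.smul_sum]
        refine Finset.sum_congr rfl fun i hi => ?_
        rw [hsx k i (Ne.symm (Finset.mem_erase.mp hi).1)]
      have h2 : ∑ i ∈ Finset.univ.erase k, d i = -(d k) := by
        have h3 := Finset.add_sum_erase Finset.univ d (Finset.mem_univ k)
        rw [hsum0] at h3
        exact eq_neg_of_add_eq_zero_right h3
      rw [h1, h2, one_smul, smul_neg, neg_smul, neg_neg, add_smul, one_smul]
    have hT : ∀ x : EuclideanSpace ℝ (Fin n), ∑ i, ⟪x, d i⟫ • d i = ((1:ℝ) + 1/n) • x := by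
      intro x
      obtain ⟨b, -, rfl⟩ := hspan x
      calc ∑ i, ⟪∑ k, b k • d k, d i⟫ • d i
          = ∑ i, ∑ k, (b k * ⟪d k, d i⟫) • d i := by
            refine Finset.sum_congr rfl fun i _ => ?_
            rw [sum_inner, Finset.sum_smul]
            refine Finset.sum_congr rfl fun k _ => ?_
            rw [real_inner_smul_left]
        _ = ∑ k, ∑ i, (b k * ⟪d k, d i⟫) • d i := Finset.sum_comm
        _ = ∑ k, b k • (((1:ℝ) + 1/n) • d k) := by
            refine Finset.sum_congr rfl fun k _ => ?_
            rw [← hTk k, Finset.smul_sum]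
            refine Finset.sum_congr rfl fun i _ => ?_
            rw [smul_smul]
        _ = ((1:ℝ) + 1/n) • ∑ k, b k • d k := by
            rw [Finset.smul_sum]
            refine Finset.sum_congr rfl fun k _ => ?_
            rw [smul_comm]
    refine le_csInf hSne ?_
    rintro r ⟨v, hv, rfl⟩
    set m := Finset.univ.sup' Finset.univ_nonempty (fun i => ⟪v, d i⟫) with hm
    have hle : ∀ i, ⟪v, d i⟫ ≤ m := by
      intro i
      calc ⟪v, d i⟫ ≤ Finset.univ.sup' Finset.univ_nonempty (fun i => ⟪v, d i⟫) :=
            Finset.le_sup' (fun i => ⟪v, d i⟫) (Finset.mem_univ i)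
        _ = m := hm.symm
    have hge1 : ∀ i, -1 ≤ ⟪v, d i⟫ := by
      intro i
      have := abs_real_inner_le_norm v (d i)
      rw [hv, hunit, one_mul] at this
      linarith [neg_abs_le (⟪v, d i⟫)]
    have htsum : ∑ i, ⟪v, d i⟫ = 0 := by
      rw [← inner_sum, hsum0, inner_zero_right]
    have htsq : ∑ i, ⟪v, d i⟫ ^ 2 = 1 + 1/n := by
      have h1 : ⟪v, ∑ i, ⟪v, d i⟫ • d i⟫ = ∑ i, ⟪v, d i⟫ ^ 2 := by
        rw [inner_sum]
        refine Finset.sum_congr rfl fun i _ => ?_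
        rw [real_inner_smul_right]; ring
      rw [← h1, hT v, real_inner_smul_right, real_inner_self_eq_norm_sq, hv, one_pow, mul_one]
    have hkey : ∀ i, ⟪v, d i⟫ ^ 2 ≤ (m - 1) * ⟪v, d i⟫ + m := by
      intro i
      nlinarith [hle i, hge1 i]
    have hsumineq : (1:ℝ) + 1/n ≤ (n + 1) * m := by
      have h1 : ∑ i, ⟪v, d i⟫ ^ 2 ≤ ∑ i, ((m - 1) * ⟪v, d i⟫ + m) :=
        Finset.sum_le_sum fun i _ => hkey i
      rw [htsq] at h1
      rw [Finset.sum_add_distrib, ← Finset.mul_sum, htsum, mul_zero, zero_add,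
        Finset.sum_const, Finset.card_univ, Fintype.card_fin, nsmul_eq_mul] at h1
      push_cast at h1
      linarith
    have hinv : (1/(n:ℝ)) * n = 1 := by field_simp
    rw [div_le_iff₀ hnR]
    nlinarith [hsumineq, hnR, hinv]
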